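/- In every 2-swap game with only strategic agents in which the two types have the same number x ≥ 2 of agents (so n = 2x), every equilibrium assignment v satisfies SW(v*) ≤ 4·SW(v) for every assignment v*. In other words, the social price of anarchy of 2-swap games with only strategic agents and equal type sizes is at most 4. -/

import Mathlib

open Finset

namespace SwapGame

/-- Build a simple graph from a (not necessarily symmetric) boolean relation
by symmetrizing it and removing loops. -/
def mkGraph {V : Type*} (r : V → V → Bool) : SimpleGraph V where
  Adj a b := a ≠ b ∧ (r a b ∨ r b a)
  symm := ⟨by intro a b h; exact ⟨Ne.symm h.1, Or.symm h.2⟩⟩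
  loopless := ⟨by intro a h; exact h.1 rfl⟩

instance mkGraph.instDecidableRel {V : Type*} [DecidableEq V] (r : V → V → Bool) :
    DecidableRel (mkGraph r).Adj :=
  fun a b => inferInstanceAs (Decidable (a ≠ b ∧ (r a b ∨ r b a)))

variable {A V K : Type*} [Fintype V] [DecidableEq A] [DecidableEq V] [DecidableEq K]

/-- The assignment obtained from `σ` by swapping the locations of agents `i` and `j`. -/
def swapA (σ : A ≃ V) (i j : A) : A ≃ V := (Equiv.swap i j).trans σ

/-- The utility of agent `i` under assignment `σ`: the fraction of the neighbors of the
node of `i` that are occupied by agents of the same type (friends of `i`). -/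
def util (G : SimpleGraph V) [DecidableRel G.Adj] (c : A → K) (σ : A ≃ V) (i : A) : ℚ :=
  (((G.neighborFinset (σ i)).filter (fun w => c (σ.symm w) = c i)).card : ℚ) /
    ((G.neighborFinset (σ i)).card : ℚ)

/-- Agents `i` and `j` both strictly increase their utility by swapping their locations. -/
def improving (G : SimpleGraph V) [DecidableRel G.Adj] (c : A → K) (σ : A ≃ V)
    (i j : A) : Prop :=
  util G c σ i < util G c (swapA σ i j) i ∧ util G c σ j < util G c (swapA σ i j) j

/-- An assignment is an equilibrium if no pair of agents can both strictly increase
their utility by swapping positions. -/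
def isEquilibrium (G : SimpleGraph V) [DecidableRel G.Adj] (c : A → K) (σ : A ≃ V) : Prop :=
  ¬ ∃ i j : A, improving G c σ i j

/-- The social welfare of an assignment: the sum of the utilities of all agents. -/
def SW [Fintype A] (G : SimpleGraph V) [DecidableRel G.Adj] (c : A → K) (σ : A ≃ V) : ℚ :=
  ∑ i : A, util G c σ i

/-- Agent `i` is exposed: at least one neighbor is occupied by an agent of another type. -/
def exposed (G : SimpleGraph V) [DecidableRel G.Adj] (c : A → K) (σ : A ≃ V) (i : A) : Prop :=
  ((G.neighborFinset (σ i)).filter (fun w => c (σ.symm w) ≠ c i)).Nonempty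

instance exposed.instDecidable (G : SimpleGraph V) [DecidableRel G.Adj] (c : A → K)
    (σ : A ≃ V) : DecidablePred (exposed G c σ) :=
  fun _ => inferInstanceAs (Decidable (Finset.Nonempty _))

/-- The degree of integration of an assignment: the number of exposed agents. -/
def DI [Fintype A] (G : SimpleGraph V) [DecidableRel G.Adj] (c : A → K) (σ : A ≃ V) : ℕ :=
  (univ.filter (fun i : A => exposed G c σ i)).card

end SwapGame

/-!
When agents `i` and `j` of different types swap, the friends of `i` at the node of `j` are the
neighbours of `j` not of `j`'s type, except `i` itself; so its new utility is
`1 - u j - [i ~ j] / deg j`. As no such pair gains in an equilibrium,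
`u i + u j ≥ 1 - [i ~ j] (1 / deg i + 1 / deg j)`. Summing over all pairs of agents of different
types, the terms `[i ~ j] / deg i` add up to `1 - u i`, which gives `n (x - 2) ≤ 2 (x - 1) SW`.
For `x ≥ 3` this is `SW ≥ x / 2`, while every assignment has welfare at most `n = 2x`.
For `x = 2`, a non-adjacent pair of different types already gives `SW ≥ 1`; otherwise every agent
is adjacent to both agents of the other type, so its utility is `0` or at least `1 / 3`, and an
agent of utility `0` forces both agents of the other type to utility at least `1 / 2`.
-/

namespace SwapGame

section Utilities

variable {A V K : Type*} [Fintype V] [DecidableEq K]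
  (G : SimpleGraph V) [DecidableRel G.Adj] (c : A → K) (σ : A ≃ V)

def enemyDegree (i : A) : ℕ := #{w ∈ G.neighborFinset (σ i) | c (σ.symm w) ≠ c i}

lemma util_nonneg (i : A) : 0 ≤ util G c σ i := by
  unfold util
  positivity

lemma util_le_one (i : A) : util G c σ i ≤ 1 :=
  div_le_one_of_le₀ (by exact_mod_cast card_filter_le _ _) (Nat.cast_nonneg _)

lemma enemyDegree_le_degree (i : A) : enemyDegree G c σ i ≤ G.degree (σ i) :=
  (card_filter_le _ _).trans_eq (G.card_neighborFinset_eq_degree _)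

lemma util_eq_one_sub_enemyDegree {i : A} (hd : 0 < G.degree (σ i)) :
    util G c σ i = 1 - enemyDegree G c σ i / G.degree (σ i) := by
  have hsplit := card_filter_add_card_filter_not (s := G.neighborFinset (σ i))
    (p := fun w => c (σ.symm w) = c i)
  rw [SimpleGraph.card_neighborFinset_eq_degree] at hsplit
  rw [util, SimpleGraph.card_neighborFinset_eq_degree, eq_sub_iff_add_eq, ← add_div,
    div_eq_one_iff_eq (by positivity)]
  exact_mod_cast hsplit

variable [Fintype A]

lemma sum_util_le_SW (s : Finset A) : ∑ i ∈ s, util G c σ i ≤ SW G c σ :=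
  sum_le_sum_of_subset_of_nonneg (subset_univ s) fun i _ _ => util_nonneg G c σ i

lemma SW_le_card : SW G c σ ≤ Fintype.card A :=
  calc SW G c σ ≤ ∑ _i : A, (1 : ℚ) := sum_le_sum fun i _ => util_le_one G c σ i
    _ = Fintype.card A := by simp

lemma card_enemies_adj_eq_enemyDegree (i : A) :
    #{j | c j ≠ c i ∧ G.Adj (σ i) (σ j)} = enemyDegree G c σ i :=
  card_nbij' σ σ.symm (fun j hj => by simp_all) (fun w hw => by simp_all)
    (fun j _ => σ.symm_apply_apply j) (fun w _ => σ.apply_symm_apply w)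

lemma sum_ite_adj_inv_degree {i : A} (hd : 0 < G.degree (σ i)) :
    ∑ j ∈ {j | c j ≠ c i}, (if G.Adj (σ i) (σ j) then (G.degree (σ i) : ℚ)⁻¹ else 0) =
      1 - util G c σ i := by
  rw [sum_ite, sum_const_zero, add_zero, sum_const, filter_filter,
    card_enemies_adj_eq_enemyDegree, nsmul_eq_mul, util_eq_one_sub_enemyDegree G c σ hd,
    div_eq_mul_inv]
  ring

end Utilities

lemma swapA_comm {A V : Type*} [DecidableEq A] (σ : A ≃ V) (i j : A) :
    swapA σ i j = swapA σ j i := by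
  rw [swapA, swapA, Equiv.swap_comm]

lemma isEquilibrium.util_swapA_le {A V K : Type*} [Fintype V] [DecidableEq A] [DecidableEq K]
    {G : SimpleGraph V} [DecidableRel G.Adj] {c : A → K} {σ : A ≃ V}
    (heq : isEquilibrium G c σ) (i j : A) :
    util G c (swapA σ i j) i ≤ util G c σ i ∨ util G c (swapA σ i j) j ≤ util G c σ j := by
  have h : ¬ improving G c σ i j := fun h => heq ⟨i, j, h⟩
  simpa only [improving, not_and_or, not_lt] using h

section TwoTypes

variable {A V : Type*} [Fintype V] [DecidableEq A] [DecidableEq V]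
  (G : SimpleGraph V) [DecidableRel G.Adj] (c : A → Fin 2) (σ : A ≃ V)

lemma util_swapA_self {i j : A} (hc : c i ≠ c j) (hd : 0 < G.degree (σ j)) :
    util G c (swapA σ i j) i =
      1 - util G c σ j - if G.Adj (σ i) (σ j) then (G.degree (σ j) : ℚ)⁻¹ else 0 := by
  -- after the swap, the friends of `i` are the enemies of `j` other than `i` itself
  have hfriends : {w ∈ G.neighborFinset (σ j) | c ((swapA σ i j).symm w) = c i} =
      {w ∈ G.neighborFinset (σ j) | c (σ.symm w) ≠ c j}.erase (σ i) := by
    ext w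
    obtain ⟨a, rfl⟩ := σ.surjective w
    rw [mem_filter, mem_erase, mem_filter]
    simp only [swapA, Equiv.symm_trans_apply, Equiv.symm_swap, Equiv.symm_apply_apply,
      SimpleGraph.mem_neighborFinset, σ.injective.ne_iff]
    by_cases hai : a = i
    · simp [hai, hc.symm]
    by_cases haj : a = j
    · simp [haj]
    rw [Equiv.swap_apply_of_ne_of_ne hai haj]
    have : c a = c i ↔ c a ≠ c j := by omega
    tauto
  have hmem : σ i ∈ {w ∈ G.neighborFinset (σ j) | c (σ.symm w) ≠ c j} ↔ G.Adj (σ i) (σ j) := by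
    simp [hc, G.adj_comm]
  have hnum : (#{w ∈ G.neighborFinset (σ j) | c ((swapA σ i j).symm w) = c i} : ℚ) =
      enemyDegree G c σ j - if G.Adj (σ i) (σ j) then 1 else 0 := by
    rw [hfriends, card_erase_eq_ite, enemyDegree]
    by_cases h : G.Adj (σ i) (σ j)
    · rw [if_pos (hmem.mpr h), if_pos h, Nat.cast_sub (card_pos.mpr ⟨_, hmem.mpr h⟩),
        Nat.cast_one]
    · rw [if_neg (mt hmem.mp h), if_neg h, sub_zero]
  have hpos : swapA σ i j i = σ j := by simp [swapA]
  rw [util, hpos, hnum, SimpleGraph.card_neighborFinset_eq_degree,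
    util_eq_one_sub_enemyDegree G c σ hd]
  split_ifs <;> field_simp <;> ring

variable {G c σ}

lemma isEquilibrium.one_sub_util_le_or {i j : A} (heq : isEquilibrium G c σ) (hc : c i ≠ c j)
    (hdi : 0 < G.degree (σ i)) (hdj : 0 < G.degree (σ j)) :
    1 - util G c σ j - (if G.Adj (σ i) (σ j) then (G.degree (σ j) : ℚ)⁻¹ else 0) ≤
        util G c σ i ∨
      1 - util G c σ i - (if G.Adj (σ i) (σ j) then (G.degree (σ i) : ℚ)⁻¹ else 0) ≤
        util G c σ j := by
  have hswap := util_swapA_self G c σ hc.symm hdi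
  rw [swapA_comm] at hswap
  simp only [G.adj_comm (σ j) (σ i)] at hswap
  rw [← util_swapA_self G c σ hc hdj, ← hswap]
  exact heq.util_swapA_le i j

lemma isEquilibrium.one_sub_le_util_add_util {i j : A} (heq : isEquilibrium G c σ)
    (hc : c i ≠ c j) (hdi : 0 < G.degree (σ i)) (hdj : 0 < G.degree (σ j)) :
    1 - (if G.Adj (σ i) (σ j) then (G.degree (σ i) : ℚ)⁻¹ else 0) -
        (if G.Adj (σ i) (σ j) then (G.degree (σ j) : ℚ)⁻¹ else 0) ≤
      util G c σ i + util G c σ j := by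
  have hinv : ∀ d : ℕ, 0 ≤ (if G.Adj (σ i) (σ j) then (d : ℚ)⁻¹ else 0) := by
    intro d
    split_ifs <;> positivity
  rcases heq.one_sub_util_le_or hc hdi hdj with h | h <;>
    linarith [hinv (G.degree (σ i)), hinv (G.degree (σ j))]

end TwoTypes

section TwoTypesSums

variable {A V : Type*} [Fintype A] [Fintype V] [DecidableEq A] [DecidableEq V]
  {G : SimpleGraph V} [DecidableRel G.Adj] {c : A → Fin 2} {σ : A ≃ V}

lemma isEquilibrium.card_mul_sub_two_le_SW (heq : isEquilibrium G c σ) {x : ℕ}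
    (hd : ∀ i, 0 < G.degree (σ i)) (hopp : ∀ i, #{j | c j ≠ c i} = x) :
    (Fintype.card A : ℚ) * (x - 2) ≤ 2 * (x - 1) * SW G c σ := by
  have hcomm (f : A → A → ℚ) :
      ∑ i, ∑ j ∈ {j | c j ≠ c i}, f i j = ∑ j, ∑ i ∈ {i | c i ≠ c j}, f i j :=
    sum_comm' (by simp [ne_comm])
  have hpairs : ∑ i, ∑ j ∈ {j | c j ≠ c i},
      (1 - (if G.Adj (σ i) (σ j) then (G.degree (σ i) : ℚ)⁻¹ else 0) -
        (if G.Adj (σ i) (σ j) then (G.degree (σ j) : ℚ)⁻¹ else 0)) ≤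
      ∑ i, ∑ j ∈ {j | c j ≠ c i}, (util G c σ i + util G c σ j) :=
    sum_le_sum fun i _ => sum_le_sum fun j hj =>
      heq.one_sub_le_util_add_util (mem_filter.mp hj).2.symm (hd i) (hd j)
  have hleft : ∑ i, ∑ j ∈ {j | c j ≠ c i},
      (if G.Adj (σ i) (σ j) then (G.degree (σ i) : ℚ)⁻¹ else 0) = Fintype.card A - SW G c σ := by
    rw [sum_congr rfl fun i _ => sum_ite_adj_inv_degree G c σ (hd i), sum_sub_distrib]
    simp [SW]
  have hright : ∑ i, ∑ j ∈ {j | c j ≠ c i},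
      (if G.Adj (σ i) (σ j) then (G.degree (σ j) : ℚ)⁻¹ else 0) = Fintype.card A - SW G c σ := by
    rw [hcomm, ← hleft]
    exact sum_congr rfl fun j _ => sum_congr rfl fun i _ => by
      simp only [G.adj_comm (σ i) (σ j)]
  have hutil : ∑ i, ∑ j ∈ {j | c j ≠ c i}, (util G c σ i + util G c σ j) = 2 * x * SW G c σ := by
    rw [sum_congr rfl fun i _ => sum_add_distrib, sum_add_distrib,
      hcomm fun _ j => util G c σ j]
    simp only [sum_const, hopp, nsmul_eq_mul, ← mul_sum, SW]
    ring
  simp only [sum_sub_distrib, sum_const, hopp, card_univ, nsmul_eq_mul, mul_one, hleft, hright,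
    hutil] at hpairs
  linarith

lemma isEquilibrium.one_le_SW_of_adj_of_card_eq_four (heq : isEquilibrium G c σ)
    (hd : ∀ i, 0 < G.degree (σ i)) (hopp : ∀ i, #{j | c j ≠ c i} = 2)
    (hA : Fintype.card A = 4) (hadj : ∀ i j, c i ≠ c j → G.Adj (σ i) (σ j)) :
    1 ≤ SW G c σ := by
  have henemy (k : A) : enemyDegree G c σ k = 2 := by
    rw [← card_enemies_adj_eq_enemyDegree,
      filter_congr fun j _ => and_iff_left_of_imp fun h => hadj k j (Ne.symm h)]
    exact hopp k
  have hutil (k : A) : util G c σ k = 1 - 2 / G.degree (σ k) := by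
    rw [util_eq_one_sub_enemyDegree G c σ (hd k), henemy, Nat.cast_ofNat]
  by_cases hthird : ∀ k, 1 / 3 ≤ util G c σ k
  · calc (1 : ℚ) ≤ ∑ _k : A, 1 / 3 := by simp [hA]; norm_num
      _ ≤ SW G c σ := sum_le_sum fun k _ => hthird k
  push Not at hthird
  obtain ⟨a, ha⟩ := hthird
  have hda : G.degree (σ a) = 2 := by
    have hlow := henemy a ▸ enemyDegree_le_degree G c σ a
    have hhigh : G.degree (σ a) < 4 := hA ▸ Fintype.card_congr σ ▸ G.degree_lt_card_verts (σ a)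
    obtain h | h : G.degree (σ a) = 2 ∨ G.degree (σ a) = 3 := by omega
    · exact h
    · rw [hutil, h] at ha
      norm_num at ha
  have hua : util G c σ a = 0 := by
    rw [hutil, hda]
    norm_num
  -- `a` would gain from swapping with any agent `b` of the other type, so `b` must not gain
  have hhalf (b : A) (hc : c a ≠ c b) : 1 / 2 ≤ util G c σ b := by
    rcases heq.one_sub_util_le_or hc (hd a) (hd b) with h | h
    · have hdb : (0 : ℚ) < (G.degree (σ b) : ℚ)⁻¹ := by have := hd b; positivity
      rw [if_pos (hadj a b hc), hua, hutil b, div_eq_mul_inv] at h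
      linarith
    · rw [if_pos (hadj a b hc), hua, hda] at h
      linarith
  calc (1 : ℚ) = ∑ _b ∈ {b | c b ≠ c a}, 1 / 2 := by simp [hopp]
    _ ≤ ∑ b ∈ {b | c b ≠ c a}, util G c σ b :=
      sum_le_sum fun b hb => hhalf b (mem_filter.mp hb).2.symm
    _ ≤ SW G c σ := sum_util_le_SW G c σ _

lemma isEquilibrium.one_le_SW_of_card_eq_four (heq : isEquilibrium G c σ)
    (hd : ∀ i, 0 < G.degree (σ i)) (hopp : ∀ i, #{j | c j ≠ c i} = 2)
    (hA : Fintype.card A = 4) : 1 ≤ SW G c σ := by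
  by_cases hadj : ∀ i j, c i ≠ c j → G.Adj (σ i) (σ j)
  · exact heq.one_le_SW_of_adj_of_card_eq_four hd hopp hA hadj
  push Not at hadj
  obtain ⟨i, j, hc, hnadj⟩ := hadj
  have hpair := heq.one_sub_le_util_add_util hc (hd i) (hd j)
  simp only [if_neg hnadj, sub_zero] at hpair
  calc 1 ≤ util G c σ i + util G c σ j := hpair
    _ = ∑ k ∈ {i, j}, util G c σ k := (sum_pair (ne_of_apply_ne c hc)).symm
    _ ≤ SW G c σ := sum_util_le_SW G c σ _

end TwoTypesSums

section TypeCounts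

variable {A : Type*} [Fintype A] {c : A → Fin 2} {x : ℕ}

lemma card_filter_ne_of_card_eq (h0 : #{i | c i = 0} = x) (h1 : #{i | c i = 1} = x) (k : A) :
    #{j | c j ≠ c k} = x := by
  obtain hk | hk : c k = 0 ∨ c k = 1 := by omega
  · rw [hk, ← h1]
    exact congrArg card (filter_congr fun j _ => by omega)
  · rw [hk, ← h0]
    exact congrArg card (filter_congr fun j _ => by omega)

lemma card_eq_two_mul_of_card_eq (h0 : #{i | c i = 0} = x) (h1 : #{i | c i = 1} = x) :
    Fintype.card A = 2 * x := by
  rw [← card_univ, ← card_filter_add_card_filter_not (p := fun i => c i = 0), h0,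
    filter_congr fun i _ => (by omega : ¬c i = 0 ↔ c i = 1), h1, two_mul]

end TypeCounts

/-- in every 2-swap game with only strategic agents in which the two types
have the same number `x ≥ 2` of agents (so `n = 2x`), every equilibrium assignment `v`
satisfies `SW(v*) ≤ 4·SW(v)` for every assignment `v*`; i.e. the social price of anarchy
of 2-swap games with only strategic agents and equal type sizes is at most 4. -/
theorem poa_le_four_equal_types {A V : Type} [Fintype A] [DecidableEq A]
    [Fintype V] [DecidableEq V] (G : SimpleGraph V) [DecidableRel G.Adj]
    (hconn : G.Connected) (c : A → Fin 2) (x : ℕ) (hx : 2 ≤ x)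
    (h0 : (univ.filter (fun i => c i = 0)).card = x)
    (h1 : (univ.filter (fun i => c i = 1)).card = x)
    (σ : A ≃ V) (heq : isEquilibrium G c σ) (σ' : A ≃ V) :
    SW G c σ' ≤ 4 * SW G c σ := by
  have hopp := card_filter_ne_of_card_eq h0 h1
  have hcard := card_eq_two_mul_of_card_eq h0 h1
  have : Nontrivial A := Fintype.one_lt_card_iff_nontrivial.mp (by omega)
  have : Nontrivial V := σ.symm.nontrivial
  have hd (i : A) : 0 < G.degree (σ i) := hconn.preconnected.degree_pos_of_nontrivial (σ i)
  have hopt : SW G c σ' ≤ 2 * x := by exact_mod_cast hcard ▸ SW_le_card G c σ'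
  obtain rfl | hx3 := hx.eq_or_lt
  · norm_num at hopt
    linarith [heq.one_le_SW_of_card_eq_four hd hopp hcard]
  · have hbound := heq.card_mul_sub_two_le_SW hd hopp
    have hx3' : (3 : ℚ) ≤ x := by exact_mod_cast hx3
    rw [hcard, Nat.cast_mul, Nat.cast_two] at hbound
    nlinarith

end SwapGame
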